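/- Every Fuchsian pseudopolynomial factors off its Fuchsian part: if P(t,ξ) = Σ_{j≥0} t^j p_j(ξ) ∈ ℂ[[t]][ξ] has p_0 ≠ 0 with d = deg p_0, then there exist Q, R ∈ ℂ[[t]][ξ] with P = Q·R, where Q ≡ p_0 mod t, R ≡ 1 mod t, and every coefficient polynomial of Q in powers of t beyond the constant term has degree ≤ d − 1. -/

import Mathlib

/-!
Comparing coefficients of `tʲ` in `P = Q * R` with `q₀ = p₀`, `r₀ = 1` gives
`pⱼ = p₀ rⱼ + qⱼ + ∑_{0<i<j} qᵢ rⱼ₋ᵢ`, whose last sum only involves earlier coefficients.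
So `qⱼ` and `rⱼ` can be taken as the remainder and the quotient of the division of
`pⱼ - ∑_{0<i<j} qᵢ rⱼ₋ᵢ` by `p₀`, which makes `deg qⱼ < deg p₀`. If all `pⱼ` have degree
`≤ n`, induction on `j` shows that all `rⱼ` have degree `≤ n - deg p₀`: the bound on the `qᵢ` keeps
the dividend of degree `≤ n`.
-/

open Polynomial PowerSeries

namespace Polynomial

theorem natDegree_div_eq_sub {K : Type*} [Field K] (p : K[X]) {q : K[X]} (hq : q ≠ 0) :
    (p / q).natDegree = p.natDegree - q.natDegree := by
  rw [div_def, natDegree_C_mul (inv_ne_zero (leadingCoeff_ne_zero.2 hq)),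
    natDegree_divByMonic _ (monic_mul_leadingCoeff_inv hq), natDegree_mul_leadingCoeff_inv _ hq]

end Polynomial

namespace PowerSeries

variable {K : Type*} [Field K]

noncomputable def fuchsianCoeffs (P : K[X]⟦X⟧) : ℕ → K[X] × K[X]
  | 0 => (constantCoeff P, 1)
  | j + 1 =>
    let s := PowerSeries.coeff (j + 1) P -
      ∑ i : Fin j, (fuchsianCoeffs P (i + 1)).1 * (fuchsianCoeffs P (j - i)).2
    (s % constantCoeff P, s / constantCoeff P)

noncomputable def fuchsianResidual (P : K[X]⟦X⟧) (j : ℕ) : K[X] :=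
  PowerSeries.coeff (j + 1) P -
    ∑ i ∈ Finset.range j, (fuchsianCoeffs P (i + 1)).1 * (fuchsianCoeffs P (j - i)).2

theorem fuchsianCoeffs_succ (P : K[X]⟦X⟧) (j : ℕ) :
    fuchsianCoeffs P (j + 1) =
      (fuchsianResidual P j % constantCoeff P, fuchsianResidual P j / constantCoeff P) := by
  rw [fuchsianCoeffs, fuchsianResidual, Finset.sum_range]

noncomputable def fuchsianPart (P : K[X]⟦X⟧) : K[X]⟦X⟧ := mk fun j => (fuchsianCoeffs P j).1

noncomputable def fuchsianCofactor (P : K[X]⟦X⟧) : K[X]⟦X⟧ :=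
  mk fun j => (fuchsianCoeffs P j).2

theorem constantCoeff_fuchsianPart (P : K[X]⟦X⟧) :
    constantCoeff (fuchsianPart P) = constantCoeff P := by
  rw [fuchsianPart, constantCoeff_mk, fuchsianCoeffs]

theorem constantCoeff_fuchsianCofactor (P : K[X]⟦X⟧) :
    constantCoeff (fuchsianCofactor P) = 1 := by
  rw [fuchsianCofactor, constantCoeff_mk, fuchsianCoeffs]

theorem fuchsianPart_mul_fuchsianCofactor (P : K[X]⟦X⟧) :
    fuchsianPart P * fuchsianCofactor P = P := by
  refine PowerSeries.ext fun n => ?_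
  have h₀ : fuchsianCoeffs P 0 = (constantCoeff P, 1) := by rw [fuchsianCoeffs]
  rcases n with _ | j
  · simp [fuchsianPart, fuchsianCofactor, h₀]
  · obtain ⟨hq, hr⟩ := Prod.ext_iff.mp (fuchsianCoeffs_succ P j)
    rw [coeff_mul, Finset.Nat.sum_antidiagonal_eq_sum_range_succ_mk, Finset.sum_range_succ',
      Finset.sum_range_succ]
    simp only [fuchsianPart, fuchsianCofactor, coeff_mk, Nat.sub_self, Nat.sub_zero,
      Nat.add_sub_add_right, h₀, hq, hr]
    linear_combination EuclideanDomain.div_add_mod (fuchsianResidual P j) (constantCoeff P) +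
      fuchsianResidual.eq_1 P j

theorem degree_coeff_fuchsianPart_lt {P : K[X]⟦X⟧} (hP : constantCoeff P ≠ 0) {j : ℕ}
    (hj : 1 ≤ j) : (PowerSeries.coeff j (fuchsianPart P)).degree < (constantCoeff P).degree := by
  obtain ⟨j, rfl⟩ := Nat.exists_eq_add_of_le' hj
  simpa [fuchsianPart, fuchsianCoeffs_succ] using degree_mod_lt _ hP

theorem natDegree_coeff_fuchsianCofactor_le {P : K[X]⟦X⟧} (hP : constantCoeff P ≠ 0) {n : ℕ}
    (hn : ∀ j, (PowerSeries.coeff j P).natDegree ≤ n) (j : ℕ) :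
    (PowerSeries.coeff j (fuchsianCofactor P)).natDegree ≤ n - (constantCoeff P).natDegree := by
  induction j using Nat.strong_induction_on with
  | _ j ih =>
  rcases j with _ | j
  · simp [fuchsianCofactor, fuchsianCoeffs]
  have hp₀ : (constantCoeff P).natDegree ≤ n := coeff_zero_eq_constantCoeff_apply P ▸ hn 0
  have hres : (fuchsianResidual P j).natDegree ≤ n := by
    refine (natDegree_sub_le _ _).trans (max_le (hn _) (natDegree_sum_le_of_forall_le _ _ ?_))
    intro i hi
    have hq := natDegree_le_natDegree (degree_coeff_fuchsianPart_lt hP (Nat.le_add_left 1 i)).le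
    have hr := ih (j - i) (by omega)
    rw [fuchsianPart, coeff_mk] at hq
    rw [fuchsianCofactor, coeff_mk] at hr
    have := Finset.mem_range.mp hi
    exact natDegree_mul_le.trans (by omega)
  rw [fuchsianCofactor, coeff_mk, fuchsianCoeffs_succ, natDegree_div_eq_sub _ hP]
  omega

end PowerSeries

/-- A pseudopolynomial `P = Σ_j t^j p_j(ξ) ∈ ℂ[[t]][ξ]` (an element of `(ℂ[ξ])[[t]]`
with bounded `ξ`-degrees) with `p₀ ≠ 0`, `d = deg p₀`, factors as `P = Q·R` where
`Q ≡ p₀ mod t`, `R ≡ 1 mod t`, all higher `t`-coefficients of `Q` have `ξ`-degree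
`≤ d - 1` (i.e. `< d`), and `Q, R` are again pseudopolynomials. -/
theorem fuchsian_part_factors_off
    (P : PowerSeries (Polynomial ℂ))
    (hbd : ∃ n : ℕ, ∀ j : ℕ, (PowerSeries.coeff j P).degree ≤ (n : ℕ))
    (hp₀ : PowerSeries.constantCoeff P ≠ 0)
    (d : ℕ) (hd : (PowerSeries.constantCoeff P).degree = d) :
    ∃ Q R : PowerSeries (Polynomial ℂ),
      P = Q * R ∧
      PowerSeries.constantCoeff Q = PowerSeries.constantCoeff P ∧
      PowerSeries.constantCoeff R = 1 ∧
      (∀ j : ℕ, 1 ≤ j → (PowerSeries.coeff j Q).degree < (d : ℕ)) ∧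
      (∃ m : ℕ, ∀ j : ℕ, (PowerSeries.coeff j R).degree ≤ (m : ℕ)) := by
  obtain ⟨n, hn⟩ := hbd
  have hRdeg :=
    natDegree_coeff_fuchsianCofactor_le hp₀ fun j => natDegree_le_iff_degree_le.mpr (hn j)
  exact ⟨fuchsianPart P, fuchsianCofactor P, (fuchsianPart_mul_fuchsianCofactor P).symm,
    constantCoeff_fuchsianPart P, constantCoeff_fuchsianCofactor P,
    fun j hj => hd ▸ degree_coeff_fuchsianPart_lt hp₀ hj,
    n - (constantCoeff P).natDegree, fun j => natDegree_le_iff_degree_le.mp (hRdeg j)⟩
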